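/- With the data and maps D₄, D₃ as in the context, let W' ⊆ W be the ℚ-linear span of the basis vectors x, y, z, p_1,…,p_a, and let D₃' : W' → U be the restriction of D₃ to W' (equivalently, the matrix obtained from D₃ by deleting the columns indexed by q_1,…,q_a and r_1,…,r_b). Then D₃' is injective and range D₃' = range D₃. (This is the key step showing that the 5-dimensional link of a point of the 0-dimensional stratum of a complex 3-dimensional toric variety is rationally 3-segmented: the subcomplex obtained by deleting one 2-cell from each 2-torus has the same homology as the link in degrees ≤ 2 and vanishing homology in degrees ≥ 3.) -/

import Mathlib

/-
On `W' = ⟨x, y, z, p_i⟩` the kernel equations of `∂₃'` say that `p_i = -m_i l_i v_x`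
`= -n_i l_i v_y = -n_i m_i v_z` and `m'_j v_x = n'_j v_y = 0`. Hence the linear form
`g ↦ v_y g₀ - v_x g₁` vanishes on all the vectors `(n_i, m_i, l_i)` and `(n'_j, m'_j, 0)`,
which span `ℚ³`, so `v_x = v_y = 0`; then `p_i = 0` and `v_z = 0`. For the ranges: the
`q_i`-column of `∂₃` is minus its `p_i`-column and the `r_j`-columns vanish.
-/

/-- Index set for the basis of `W = ℚ^(3+2a+b)`: the three basis vectors `x, y, z`,
then `p_1, …, p_a`, then `q_1, …, q_a`, then `r_1, …, r_b`. -/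
abbrev WIdx (a b : ℕ) : Type := (Fin 3 ⊕ Fin a) ⊕ (Fin a ⊕ Fin b)

/-- Index set for the basis of `U = ℚ^(1+3a+2b)`: the basis vector `w`, then the
`s_{i,k}` (`i ∈ Fin a`, `k ∈ Fin 3`), then the `t_{j,k}` (`j ∈ Fin b`, `k ∈ Fin 2`). -/
abbrev UIdx (a b : ℕ) : Type := Unit ⊕ ((Fin a × Fin 3) ⊕ (Fin b × Fin 2))

/-- The matrix of the cellular boundary operator `∂₄ : ℚ³ → W` of the CW structure on
the link of a point of the 0-dimensional stratum of a complex 3-dimensional toric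
variety: the `x`-, `y`-, `z`-rows vanish, the `p_i`- and `q_i`-rows are
`(n_i, m_i, l_i)`, and the `r_j`-rows are `(n'_j, m'_j, 0)`. -/
def M4 (a b : ℕ) (n m l : Fin a → ℤ) (n' m' : Fin b → ℤ) :
    Matrix (WIdx a b) (Fin 3) ℚ := fun i =>
  match i with
  | .inl (.inl _) => 0
  | .inl (.inr i) => ![((n i : ℤ) : ℚ), ((m i : ℤ) : ℚ), ((l i : ℤ) : ℚ)]
  | .inr (.inl i) => ![((n i : ℤ) : ℚ), ((m i : ℤ) : ℚ), ((l i : ℤ) : ℚ)]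
  | .inr (.inr j) => ![((n' j : ℤ) : ℚ), ((m' j : ℤ) : ℚ), 0]

/-- The matrix of the cellular boundary operator `∂₃ : W → U`: the `w`-row vanishes;
the `s_{i,1}`-row has `m_i·l_i` at `x`, `1` at `p_i`, `-1` at `q_i`;
the `s_{i,2}`-row has `n_i·l_i` at `y`, `1` at `p_i`, `-1` at `q_i`;
the `s_{i,3}`-row has `n_i·m_i` at `z`, `1` at `p_i`, `-1` at `q_i`;
the `t_{j,1}`-row has `-m'_j` at `x`; the `t_{j,2}`-row has `n'_j` at `y`. -/
def M3 (a b : ℕ) (n m l : Fin a → ℤ) (n' m' : Fin b → ℤ) :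
    Matrix (UIdx a b) (WIdx a b) ℚ := fun i j =>
  match i, j with
  | .inl _, _ => 0
  | .inr (.inl (i, k)), .inl (.inl c) =>
      if c = k then ![((m i * l i : ℤ) : ℚ), ((n i * l i : ℤ) : ℚ), ((n i * m i : ℤ) : ℚ)] k
      else 0
  | .inr (.inl (i, _)), .inl (.inr i') => if i' = i then 1 else 0
  | .inr (.inl (i, _)), .inr (.inl i') => if i' = i then -1 else 0
  | .inr (.inl _), .inr (.inr _) => 0
  | .inr (.inr (j, k)), .inl (.inl c) =>
      if k = 0 ∧ c = 0 then -((m' j : ℤ) : ℚ)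
      else if k = 1 ∧ c = 1 then ((n' j : ℤ) : ℚ) else 0
  | .inr (.inr _), _ => 0

section

variable {R : Type*} [CommSemiring R] {ι : Type*} [Fintype ι]

theorem Matrix.eq_zero_of_dotProduct_eq_zero_of_span_eq_top {s : Set (ι → R)}
    (hs : Submodule.span R s = ⊤) {c : ι → R} (h : ∀ g ∈ s, c ⬝ᵥ g = 0) : c = 0 :=
  dotProduct_eq_zero c fun w => LinearMap.congr_fun
    (LinearMap.ext_on hs (f := dotProductBilin R R c) (g := 0) h) w

theorem Matrix.range_toLin'_submatrix_le {m n o : Type*} [Fintype n] [Fintype o] [DecidableEq n]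
    [DecidableEq o] (M : Matrix m n R) (f : o → n) :
    LinearMap.range (M.submatrix id f).toLin' ≤ LinearMap.range M.toLin' := by
  rw [Matrix.range_toLin', Matrix.range_toLin']
  exact Submodule.span_mono (Set.range_comp_subset_range f M.col)

end

abbrev M3' (a b : ℕ) (n m l : Fin a → ℤ) (n' m' : Fin b → ℤ) :
    Matrix (UIdx a b) (Fin 3 ⊕ Fin a) ℚ :=
  (M3 a b n m l n' m').submatrix id Sum.inl

section

open Matrix

variable {a b : ℕ} {n m l : Fin a → ℤ} {n' m' : Fin b → ℤ}

theorem M3_col_q (i : Fin a) :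
    (M3 a b n m l n' m').col (.inr (.inl i)) = -(M3 a b n m l n' m').col (.inl (.inr i)) := by
  ext (_ | ⟨i', _⟩ | _) <;> simp [M3]
  split_ifs <;> simp_all

theorem M3_col_r (j : Fin b) : (M3 a b n m l n' m').col (.inr (.inr j)) = 0 := by
  ext (_ | _ | _) <;> simp [M3]

theorem range_toLin'_M3'_eq :
    LinearMap.range (M3' a b n m l n' m').toLin' = LinearMap.range (M3 a b n m l n' m').toLin' := by
  refine le_antisymm (range_toLin'_submatrix_le _ _) ?_
  rw [range_toLin', range_toLin', Submodule.span_le]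
  rintro _ ⟨(c | i) | (i | j), rfl⟩
  · exact Submodule.subset_span ⟨.inl c, rfl⟩
  · exact Submodule.subset_span ⟨.inr i, rfl⟩
  · rw [M3_col_q]
    exact neg_mem (Submodule.subset_span ⟨.inr i, rfl⟩)
  · rw [M3_col_r]
    exact zero_mem _

theorem M3'_mulVec_s (v : Fin 3 ⊕ Fin a → ℚ) (i : Fin a) (k : Fin 3) :
    (M3' a b n m l n' m' *ᵥ v) (.inr (.inl (i, k))) =
      ![(m i * l i : ℚ), n i * l i, n i * m i] k * v (.inl k) + v (.inr i) := by
  fin_cases k <;> simp [M3', M3, mulVec, dotProduct, Fintype.sum_sum_type]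

theorem M3'_mulVec_t_zero (v : Fin 3 ⊕ Fin a → ℚ) (j : Fin b) :
    (M3' a b n m l n' m' *ᵥ v) (.inr (.inr (j, 0))) = -m' j * v (.inl 0) := by
  simp [M3', M3, mulVec, dotProduct, Fintype.sum_sum_type]

theorem M3'_mulVec_t_one (v : Fin 3 ⊕ Fin a → ℚ) (j : Fin b) :
    (M3' a b n m l n' m' *ᵥ v) (.inr (.inr (j, 1))) = n' j * v (.inl 1) := by
  simp [M3', M3, mulVec, dotProduct, Fintype.sum_sum_type]

theorem M3'_mulVec_eq_zero (hn : ∀ i, n i ≠ 0) (hm : ∀ i, m i ≠ 0) (hl : ∀ i, l i ≠ 0)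
    (hspan : Submodule.span ℚ
        ((Set.range fun i => ![((n i : ℤ) : ℚ), ((m i : ℤ) : ℚ), ((l i : ℤ) : ℚ)]) ∪
          (Set.range fun j => ![((n' j : ℤ) : ℚ), ((m' j : ℤ) : ℚ), 0])) = ⊤)
    {v : Fin 3 ⊕ Fin a → ℚ} (hv : M3' a b n m l n' m' *ᵥ v = 0) : v = 0 := by
  have hs₀ (i : Fin a) : (m i * l i : ℚ) * v (.inl 0) + v (.inr i) = 0 := by
    simpa [M3'_mulVec_s] using congrFun hv (.inr (.inl (i, 0)))
  have hs₁ (i : Fin a) : (n i * l i : ℚ) * v (.inl 1) + v (.inr i) = 0 := by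
    simpa [M3'_mulVec_s] using congrFun hv (.inr (.inl (i, 1)))
  have hs₂ (i : Fin a) : (n i * m i : ℚ) * v (.inl 2) + v (.inr i) = 0 := by
    simpa [M3'_mulVec_s] using congrFun hv (.inr (.inl (i, 2)))
  have ht₀ (j : Fin b) : (m' j : ℚ) * v (.inl 0) = 0 := by
    simpa [M3'_mulVec_t_zero] using congrFun hv (.inr (.inr (j, 0)))
  have ht₁ (j : Fin b) : (n' j : ℚ) * v (.inl 1) = 0 := by
    simpa [M3'_mulVec_t_one] using congrFun hv (.inr (.inr (j, 1)))
  have hxy : ![v (.inl 1), -v (.inl 0), 0] = 0 := by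
    refine eq_zero_of_dotProduct_eq_zero_of_span_eq_top hspan ?_
    rintro _ (⟨i, rfl⟩ | ⟨j, rfl⟩) <;> simp [dotProduct, Fin.sum_univ_three]
    · apply mul_left_cancel₀ (Int.cast_ne_zero.mpr (hl i) : (l i : ℚ) ≠ 0)
      linear_combination hs₁ i - hs₀ i
    · linear_combination ht₁ j - ht₀ j
  have hx : v (.inl 0) = 0 := by simpa using congrFun hxy 1
  have hy : v (.inl 1) = 0 := by simpa using congrFun hxy 0
  have hp (i : Fin a) : v (.inr i) = 0 := by simpa [hx] using hs₀ i
  -- through the spanning set again, since `a` may be `0`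
  have hz : ![0, 0, v (.inl 2)] = 0 := by
    refine eq_zero_of_dotProduct_eq_zero_of_span_eq_top hspan ?_
    rintro _ (⟨i, rfl⟩ | ⟨j, rfl⟩) <;> simp [dotProduct, Fin.sum_univ_three]
    exact .inl (by simpa [hp, hn i, hm i] using hs₂ i)
  ext (c | i)
  · fin_cases c
    · exact hx
    · exact hy
    · simpa using congrFun hz 2
  · exact hp i

end

theorem stmt8_general (a b : ℕ) (n m l : Fin a → ℤ) (n' m' : Fin b → ℤ)
    (hn : ∀ i, n i ≠ 0) (hm : ∀ i, m i ≠ 0) (hl : ∀ i, l i ≠ 0)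
    (hspan : Submodule.span ℚ
        ((Set.range fun i => ![((n i : ℤ) : ℚ), ((m i : ℤ) : ℚ), ((l i : ℤ) : ℚ)]) ∪
          (Set.range fun j => ![((n' j : ℤ) : ℚ), ((m' j : ℤ) : ℚ), 0])) = ⊤) :
    Function.Injective
      (Matrix.toLin' ((M3 a b n m l n' m').submatrix id (Sum.inl : Fin 3 ⊕ Fin a → WIdx a b))) ∧
    LinearMap.range
        (Matrix.toLin' ((M3 a b n m l n' m').submatrix id (Sum.inl : Fin 3 ⊕ Fin a → WIdx a b))) =
      LinearMap.range (Matrix.toLin' (M3 a b n m l n' m')) :=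
  ⟨(injective_iff_map_eq_zero _).mpr fun _ hv => M3'_mulVec_eq_zero hn hm hl hspan hv,
    range_toLin'_M3'_eq⟩

/-- Let `W' ⊆ W` be the span of the basis vectors `x, y, z, p_1, …, p_a`, and let
`∂₃' : W' → U` be the restriction of `∂₃` (the matrix obtained from `∂₃` by deleting
the columns indexed by `q_1, …, q_a` and `r_1, …, r_b`).  Then `∂₃'` is injective and
has the same range as `∂₃`.  (Key step showing that the 5-dimensional link of a point
of the 0-dimensional stratum of a complex 3-dimensional toric variety is rationally
3-segmented.) -/
theorem stmt8 (a b : ℕ) (n m l : Fin a → ℤ) (n' m' : Fin b → ℤ)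
    (hn : ∀ i, n i ≠ 0) (hm : ∀ i, m i ≠ 0) (hl : ∀ i, l i ≠ 0)
    (hnm' : ∀ j, ¬(n' j = 0 ∧ m' j = 0))
    (hspan : Submodule.span ℚ
        ((Set.range fun i => ![((n i : ℤ) : ℚ), ((m i : ℤ) : ℚ), ((l i : ℤ) : ℚ)]) ∪
          (Set.range fun j => ![((n' j : ℤ) : ℚ), ((m' j : ℤ) : ℚ), 0])) = ⊤) :
    Function.Injective
      (Matrix.toLin' ((M3 a b n m l n' m').submatrix id (Sum.inl : Fin 3 ⊕ Fin a → WIdx a b))) ∧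
    LinearMap.range
        (Matrix.toLin' ((M3 a b n m l n' m').submatrix id (Sum.inl : Fin 3 ⊕ Fin a → WIdx a b))) =
      LinearMap.range (Matrix.toLin' (M3 a b n m l n' m')) :=
  stmt8_general a b n m l n' m' hn hm hl hspan
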